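/- arXiv:1709.07414 — 2 statements merged into one kernel-verified Lean document; each statement's English description precedes it below -/
import Mathlib

section
/- Let G be a digraphic bidirected graph and let u, v be vertices of G. Then u and v are strongly connected if and only if u and v are circularly connected. -/
/-- A bidirected graph on vertex type `V` with edge type `E`: each edge `e` has two
designated ends, `fst e` and `snd e`, and each end carries a sign
(`true` = `+`, `false` = `-`). -/
structure BidirGraph (V : Type*) (E : Type*) where
  fst : E → V
  snd : E → V
  sgnFst : E → Bool
  sgnSnd : E → Bool

namespace BidirGraph

variable {V E : Type*} (G : BidirGraph V E)

/-- A step is an edge together with a direction of traversal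
(`true` = from `fst` to `snd`). -/
def stepTail (s : E × Bool) : V := if s.2 then G.fst s.1 else G.snd s.1

def stepHead (s : E × Bool) : V := if s.2 then G.snd s.1 else G.fst s.1

/-- The sign of the start vertex of a step over its edge. -/
def stepTailSign (s : E × Bool) : Bool := if s.2 then G.sgnFst s.1 else G.sgnSnd s.1

/-- The sign of the end vertex of a step over its edge. -/
def stepHeadSign (s : E × Bool) : Bool := if s.2 then G.sgnSnd s.1 else G.sgnFst s.1

/-- `L` is a walk from `u` to `v`. -/
def IsWalk (u v : V) (L : List (E × Bool)) : Prop :=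
  List.Chain' (fun s t => G.stepHead s = G.stepTail t) L ∧
  (L = [] → u = v) ∧
  (∀ s, L.head? = some s → G.stepTail s = u) ∧
  (∀ s, L.getLast? = some s → G.stepHead s = v)

/-- A ditrail: a walk with pairwise distinct edges in which, at every internal vertex,
the signs over the preceding and the succeeding edges are distinct. -/
def IsDitrail (u v : V) (L : List (E × Bool)) : Prop :=
  G.IsWalk u v L ∧ (L.map Prod.fst).Nodup ∧
  List.Chain' (fun s t => G.stepHeadSign s ≠ G.stepTailSign t) L

/-- An `(α, β)`-ditrail from `u` to `v`: a ditrail with at least one edge that starts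
with sign `α` and ends with sign `β`; a trivial (edgeless) ditrail counts as an
`(α, β)`-ditrail whenever `α ≠ β`. -/
def IsABDitrail (α β : Bool) (u v : V) (L : List (E × Bool)) : Prop :=
  G.IsDitrail u v L ∧
  ((L = [] ∧ α ≠ β) ∨
   (L ≠ [] ∧ (∀ s, L.head? = some s → G.stepTailSign s = α) ∧
    (∀ s, L.getLast? = some s → G.stepHeadSign s = β)))

/-- An edge is circular if some cyclic ditrail (a closed `(α, -α)`-ditrail) contains it. -/
def IsCircular (e : E) : Prop :=
  ∃ (v : V) (α : Bool) (L : List (E × Bool)),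
    G.IsABDitrail α (!α) v v L ∧ ∃ d : Bool, (e, d) ∈ L

/-- Two vertices are circularly connected if some path (a walk without repeated
vertices) between them uses only circular edges. -/
def CircConn (u v : V) : Prop :=
  ∃ L : List (E × Bool), G.IsWalk u v L ∧ (u :: L.map G.stepHead).Nodup ∧
    ∀ p ∈ L, G.IsCircular p.1

/-- A bidirected graph is circularly connected if every two vertices are
circularly connected. -/
def CircularlyConnected : Prop := ∀ u v : V, G.CircConn u v

/-- The vertex set of a circular component: an equivalence class of circular
connectivity. -/
def IsCircComponent (C : Set V) : Prop := ∃ v : V, C = {u | G.CircConn u v}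

/-- The relation `∼_α`: `u ∼_α v` iff `u = v`, or `u` and `v` are circularly connected
and there is no `(α, α)`-ditrail between them. -/
def SimRel (α : Bool) (u v : V) : Prop :=
  u = v ∨ (G.CircConn u v ∧
    ¬ ∃ L : List (E × Bool), G.IsABDitrail α α u v L ∨ G.IsABDitrail α α v u L)

/-- A bidirected graph is digraphic if for every edge the two ends carry distinct
signs, i.e., exactly one end has sign `+` and the other has sign `-`. -/
def IsDigraphic : Prop := ∀ e : E, G.sgnFst e ≠ G.sgnSnd e

/-- A dipath: a ditrail in which no vertex occurs more than once. -/
def IsDipath (u v : V) (L : List (E × Bool)) : Prop :=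
  G.IsDitrail u v L ∧ (u :: L.map G.stepHead).Nodup

/-- Two vertices of a digraphic bidirected graph are strongly connected if there are
`(-, +)`-ditrails from `u` to `v` and from `v` to `u`. -/
def StronglyConn (u v : V) : Prop :=
  (∃ L, G.IsABDitrail false true u v L) ∧ (∃ L, G.IsABDitrail false true v u L)

end BidirGraph

/-!
In a digraphic graph a step leaves its tail with sign `-` exactly when it follows the orientation
of its edge from the `-` end to the `+` end, and a ditrail leaves every vertex with the sign it
started with. So `(-, +)`-ditrails are directed trails, strong connectivity is mutual
reachability in the underlying digraph, and an edge is circular iff its head reaches its tail.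
Both ends of a circular edge therefore reach each other, and conversely every edge of a
directed `u`–`v` path closes up to a directed cycle through `v` and `u`.
-/

namespace BidirGraph

variable {V E : Type*} {G : BidirGraph V E}

theorem isWalk_iff {u v : V} {L : List (E × Bool)} :
    G.IsWalk u v L ↔ L.IsChain (fun s t => G.stepHead s = G.stepTail t) ∧ (L = [] → u = v) ∧
      (∀ s, L.head? = some s → G.stepTail s = u) ∧
      (∀ s, L.getLast? = some s → G.stepHead s = v) :=
  Iff.rfl

theorem isWalk_nil (u : V) : G.IsWalk u u [] := by
  simp [isWalk_iff]

theorem IsWalk.eq_of_nil {u v : V} (h : G.IsWalk u v []) : u = v := h.2.1 rfl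

theorem isWalk_cons_iff {u v : V} {s : E × Bool} {L : List (E × Bool)} :
    G.IsWalk u v (s :: L) ↔ G.stepTail s = u ∧ G.IsWalk (G.stepHead s) v L := by
  cases L
  · simp [isWalk_iff, eq_comm]
  · simp [isWalk_iff, List.isChain_cons, eq_comm, and_assoc, and_left_comm]

theorem isWalk_append_iff {u v : V} {L₁ L₂ : List (E × Bool)} :
    G.IsWalk u v (L₁ ++ L₂) ↔ ∃ w, G.IsWalk u w L₁ ∧ G.IsWalk w v L₂ := by
  induction L₁ generalizing u with
  | nil => exact ⟨fun h => ⟨u, isWalk_nil u, h⟩, fun ⟨w, h₁, h₂⟩ => h₁.eq_of_nil ▸ h₂⟩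
  | cons s L ih => simp [isWalk_cons_iff, ih, and_assoc]

theorem IsWalk.append {u w v : V} {L₁ L₂ : List (E × Bool)} (h₁ : G.IsWalk u w L₁)
    (h₂ : G.IsWalk w v L₂) : G.IsWalk u v (L₁ ++ L₂) :=
  isWalk_append_iff.2 ⟨w, h₁, h₂⟩

theorem IsWalk.exists_eq_append_cons {u v : V} {L : List (E × Bool)} (h : G.IsWalk u v L)
    {p : E × Bool} (hp : p ∈ L) : ∃ L₁ L₂, L = L₁ ++ p :: L₂ ∧
      G.IsWalk u (G.stepTail p) L₁ ∧ G.IsWalk (G.stepHead p) v L₂ := by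
  obtain ⟨L₁, L₂, rfl⟩ := List.append_of_mem hp
  obtain ⟨w, h₁, h₂⟩ := isWalk_append_iff.1 h
  obtain ⟨rfl, h₂'⟩ := isWalk_cons_iff.1 h₂
  exact ⟨L₁, L₂, rfl, h₁, h₂'⟩

theorem IsWalk.exists_path {u v : V} {L : List (E × Bool)} (h : G.IsWalk u v L) :
    ∃ P, G.IsWalk u v P ∧ (u :: P.map G.stepHead).Nodup ∧ P ⊆ L := by
  match L, h with
  | [], h => exact ⟨[], h, by simp, by simp⟩
  | s :: L, h =>
    by_cases hu : u ∈ (s :: L).map G.stepHead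
    · obtain ⟨p, hp, rfl⟩ := List.mem_map.1 hu
      obtain ⟨L₁, L₂, hL, -, h₂⟩ := h.exists_eq_append_cons hp
      have : L₂.length < L.length + 1 := by
        have := congrArg List.length hL
        simp only [List.length_cons, List.length_append] at this
        omega
      obtain ⟨P, hP, hnd, hsub⟩ := h₂.exists_path
      exact ⟨P, hP, hnd, List.Subset.trans hsub (by simp [hL])⟩
    · obtain ⟨rfl, hL⟩ := isWalk_cons_iff.1 h
      obtain ⟨P, hP, hnd, hsub⟩ := hL.exists_path
      have hsub' : s :: P ⊆ s :: L := List.cons_subset_cons s hsub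
      refine ⟨s :: P, isWalk_cons_iff.2 ⟨rfl, hP⟩, ?_, hsub'⟩
      exact List.nodup_cons.2 ⟨fun hmem => hu (List.map_subset _ hsub' hmem), hnd⟩
termination_by L.length

theorem IsWalk.reflTransGen {r : V → V → Prop} {u v : V} {L : List (E × Bool)}
    (h : G.IsWalk u v L) (hr : ∀ s ∈ L, r (G.stepTail s) (G.stepHead s)) :
    Relation.ReflTransGen r u v := by
  induction L generalizing u with
  | nil => exact h.eq_of_nil ▸ .refl
  | cons s L ih =>
    obtain ⟨rfl, hL⟩ := isWalk_cons_iff.1 h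
    exact .head (hr s (by simp)) (ih hL fun t ht => hr t (by simp [ht]))

theorem stepTail_rev (e : E) (d : Bool) : G.stepTail (e, !d) = G.stepHead (e, d) := by
  cases d <;> rfl

theorem stepHead_rev (e : E) (d : Bool) : G.stepHead (e, !d) = G.stepTail (e, d) := by
  cases d <;> rfl

theorem stepTailSign_rev (e : E) (d : Bool) :
    G.stepTailSign (e, !d) = G.stepHeadSign (e, d) := by
  cases d <;> rfl

variable (G) in
/-- The underlying digraph, whose arcs run from the `-` end of an edge to its `+` end. -/
def Adj (x y : V) : Prop :=
  ∃ s : E × Bool, G.stepTailSign s = false ∧ G.stepTail s = x ∧ G.stepHead s = y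

variable (G) in
def Reach : V → V → Prop := Relation.ReflTransGen G.Adj

theorem IsWalk.reach {u v : V} {L : List (E × Bool)} (h : G.IsWalk u v L)
    (hL : ∀ s ∈ L, G.stepTailSign s = false) : G.Reach u v :=
  h.reflTransGen fun s hs => ⟨s, hL s hs, rfl, rfl⟩

theorem Reach.exists_path {u v : V} (h : G.Reach u v) : ∃ P, G.IsWalk u v P ∧
    (u :: P.map G.stepHead).Nodup ∧ ∀ s ∈ P, G.stepTailSign s = false := by
  suffices ∃ L, G.IsWalk u v L ∧ ∀ s ∈ L, G.stepTailSign s = false by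
    obtain ⟨L, hL, hf⟩ := this
    obtain ⟨P, hP, hnd, hsub⟩ := hL.exists_path
    exact ⟨P, hP, hnd, fun s hs => hf s (hsub hs)⟩
  induction h with
  | refl => exact ⟨[], isWalk_nil u, by simp⟩
  | tail _ hadj ih =>
    obtain ⟨L, hL, hf⟩ := ih
    obtain ⟨s, hs, rfl, rfl⟩ := hadj
    refine ⟨L ++ [s], hL.append (isWalk_cons_iff.2 ⟨rfl, isWalk_nil _⟩), ?_⟩
    exact List.forall_mem_append.2 ⟨hf, by simpa using hs⟩

namespace IsDigraphic

variable (hG : G.IsDigraphic)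
include hG

theorem stepHeadSign_eq (s : E × Bool) : G.stepHeadSign s = !G.stepTailSign s := by
  rcases s with ⟨e, _ | _⟩
  · exact Bool.eq_not_of_ne (hG e)
  · exact Bool.eq_not_of_ne (hG e).symm

theorem step_eq_of_fst_eq {s t : E × Bool} (he : s.1 = t.1)
    (hsgn : G.stepTailSign s = G.stepTailSign t) : s = t := by
  obtain ⟨e, d⟩ := s
  obtain ⟨e', d'⟩ := t
  obtain rfl : e = e' := he
  have := hG e
  cases d <;> cases d' <;> simp_all [stepTailSign]

theorem adj_of_stepTailSign_eq_true {s : E × Bool} (hs : G.stepTailSign s = true) :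
    G.Adj (G.stepHead s) (G.stepTail s) :=
  ⟨(s.1, !s.2), by simp [stepTailSign_rev, hG.stepHeadSign_eq, hs], stepTail_rev _ _,
    stepHead_rev _ _⟩

/-- Since `stepHeadSign = !stepTailSign`, alternation at the internal vertices keeps the
tail sign constant along a ditrail. -/
theorem stepTailSign_eq_of_isABDitrail {α β : Bool} {u v : V} {L : List (E × Bool)}
    (h : G.IsABDitrail α β u v L) : ∀ s ∈ L, G.stepTailSign s = α := by
  obtain ⟨⟨-, -, hchain⟩, hnil | ⟨-, hhead, -⟩⟩ := h
  · simp [hnil.1]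
  · refine List.IsChain.induction (fun s => G.stepTailSign s = α) L hchain ?_ ?_
    · intro s t hst hs
      rw [hG.stepHeadSign_eq, hs] at hst
      cases α <;> simpa using hst
    · exact fun hL => hhead _ (List.head?_eq_some_head hL)

theorem isABDitrail_of_forall_stepTailSign {u v : V} {L : List (E × Bool)}
    (hw : G.IsWalk u v L) (hnd : (L.map G.stepHead).Nodup)
    (hL : ∀ s ∈ L, G.stepTailSign s = false) : G.IsABDitrail false true u v L := by
  have hedges : (L.map Prod.fst).Nodup := hnd.of_map.map_on fun s hs t ht he =>
    hG.step_eq_of_fst_eq he ((hL s hs).trans (hL t ht).symm)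
  have hchain : L.IsChain (fun s t => G.stepHeadSign s ≠ G.stepTailSign t) :=
    (List.pairwise_of_forall_mem_list fun s hs t ht => by
      simp [hG.stepHeadSign_eq, hL s hs, hL t ht]).isChain
  refine ⟨⟨hw, hedges, hchain⟩, ?_⟩
  rcases L with _ | ⟨s, L⟩
  · simp
  · refine .inr ⟨by simp, fun t ht => hL t (by simp_all), fun t ht => ?_⟩
    simp [hG.stepHeadSign_eq, hL t (List.mem_of_getLast? ht)]

theorem exists_isABDitrail_iff_reach {u v : V} :
    (∃ L, G.IsABDitrail false true u v L) ↔ G.Reach u v := by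
  refine ⟨fun ⟨L, hL⟩ => hL.1.1.reach (hG.stepTailSign_eq_of_isABDitrail hL), fun h => ?_⟩
  obtain ⟨P, hP, hnd, hf⟩ := h.exists_path
  exact ⟨P, hG.isABDitrail_of_forall_stepTailSign hP hnd.of_cons hf⟩

theorem stronglyConn_iff {u v : V} : G.StronglyConn u v ↔ G.Reach u v ∧ G.Reach v u :=
  and_congr hG.exists_isABDitrail_iff_reach hG.exists_isABDitrail_iff_reach

/-- A circular edge lies on a closed ditrail all of whose steps leave their tails with one
sign `α`; the rest of that closed ditrail leads back from one end of the edge to the other,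
forwards if `α = -` and backwards if `α = +`. -/
theorem isCircular_iff_reach {s : E × Bool} (hs : G.stepTailSign s = false) :
    G.IsCircular s.1 ↔ G.Reach (G.stepHead s) (G.stepTail s) := by
  constructor
  · rintro ⟨w, α, L, hL, d, hd⟩
    have hsgn := hG.stepTailSign_eq_of_isABDitrail hL
    obtain ⟨L₁, L₂, rfl, h₁, h₂⟩ := hL.1.1.exists_eq_append_cons hd
    have hback := h₂.append h₁
    have hsgn' : ∀ t ∈ L₂ ++ L₁, G.stepTailSign t = α := fun t ht =>
      hsgn t (by simp only [List.mem_append, List.mem_cons] at ht ⊢; tauto)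
    cases α with
    | false =>
      have hfwd : (s.1, d) = s := hG.step_eq_of_fst_eq rfl ((hsgn _ (by simp)).trans hs.symm)
      exact hfwd ▸ hback.reach hsgn'
    | true =>
      have hrev : (s.1, !d) = s := hG.step_eq_of_fst_eq rfl (by
        rw [stepTailSign_rev, hG.stepHeadSign_eq, hsgn _ (by simp), hs]; rfl)
      rw [← hrev, stepTail_rev, stepHead_rev]
      exact (hback.reflTransGen fun t ht =>
        hG.adj_of_stepTailSign_eq_true (hsgn' t ht)).swap
  · intro h
    obtain ⟨P, hP, hnd, hf⟩ := h.exists_path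
    refine ⟨G.stepTail s, false, s :: P, hG.isABDitrail_of_forall_stepTailSign
      (isWalk_cons_iff.2 ⟨rfl, hP⟩) hnd ?_, s.2, by simp⟩
    simpa [hs] using hf

theorem reach_of_isCircular {s : E × Bool} (hc : G.IsCircular s.1) :
    G.Reach (G.stepTail s) (G.stepHead s) ∧ G.Reach (G.stepHead s) (G.stepTail s) := by
  obtain ⟨e, d⟩ := s
  cases hs : G.stepTailSign (e, d)
  · exact ⟨.single ⟨(e, d), hs, rfl, rfl⟩, (hG.isCircular_iff_reach hs).1 hc⟩
  · have hs' : G.stepTailSign (e, !d) = false := by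
      rw [stepTailSign_rev, hG.stepHeadSign_eq, hs]; rfl
    have := (hG.isCircular_iff_reach hs').1 hc
    rw [stepTail_rev, stepHead_rev] at this
    exact ⟨this, .single (hG.adj_of_stepTailSign_eq_true hs)⟩

theorem reach_of_circConn {u v : V} (h : G.CircConn u v) : G.Reach u v ∧ G.Reach v u := by
  obtain ⟨L, hL, -, hc⟩ := h
  have huv := hL.reflTransGen (r := G.Reach) fun s hs => (hG.reach_of_isCircular (hc s hs)).1
  have hvu := hL.reflTransGen (r := flip G.Reach) fun s hs =>
    (hG.reach_of_isCircular (hc s hs)).2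
  exact ⟨Relation.reflTransGen_closed (fun _ _ h => h) _ _ huv,
    Relation.reflTransGen_closed (fun _ _ h => h) _ _ hvu.swap⟩

theorem circConn_of_reach {u v : V} (huv : G.Reach u v) (hvu : G.Reach v u) :
    G.CircConn u v := by
  obtain ⟨P, hP, hnd, hf⟩ := huv.exists_path
  refine ⟨P, hP, hnd, fun p hp => (hG.isCircular_iff_reach (hf p hp)).2 ?_⟩
  obtain ⟨P₁, P₂, rfl, h₁, h₂⟩ := hP.exists_eq_append_cons hp
  exact (h₂.reach fun s hs => hf s (by simp [hs])).trans
    (hvu.trans (h₁.reach fun s hs => hf s (by simp [hs])))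

end IsDigraphic

end BidirGraph

/-- In a digraphic bidirected graph, two vertices are strongly
connected iff they are circularly connected. -/
theorem digraphic_stronglyConn_iff_circConn {V E : Type*} (G : BidirGraph V E)
    (hG : G.IsDigraphic) (u v : V) :
    G.StronglyConn u v ↔ G.CircConn u v :=
  hG.stronglyConn_iff.trans ⟨fun h => hG.circConn_of_reach h.1 h.2, hG.reach_of_circConn⟩
end

section
/- Let G be a b-factorizable graph, where b : V(G) → ℤ≥0. Define a binary relation ∼_{b,−} on V(G) by: u ∼_{b,−} v if and only if u = v, or u and v are b-flexibly connected and G has no (b − χ_u − χ_v)-factor. Then ∼_{b,−} is an equivalence relation on V(G). -/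
/-!
Fix a `b`-factor `M`. Toggling a set `T` of edges in `M` gives a `(b - σ_T)`-factor, where
`σ_T(t)` counts the `M`-edges of `T` at `t` minus the other edges of `T` at `t`; conversely every
`f`-factor `F` arises in this way from `T = M ∆ F`. So a `(b - χ_u - χ_w)`-factor yields an
`M`-alternating `u`–`w` trail whose end edges lie in `M`, and a flexible edge, on which two
`b`-factors disagree, lies on a closed `M`-alternating trail. Along a flexible path from `v` to `w`
these closed trails splice into an `M`-alternating trail from `v`, starting in `M`, to `w`. Where
it first meets the `u`–`w` trail we turn towards `u` or `w`, whichever keeps alternating, and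
toggle: this gives a `(b - χ_v - χ_u)`- or a `(b - χ_v - χ_w)`-factor. Hence `u ∼ v ∼ w` forces
`u ∼ w`, flexible connectivity being transitive.
-/

variable {V : Type*} [Fintype V] [DecidableEq V]

/-- `M` is a `b`-factor of `G`: a set of edges of `G` such that every vertex `v` is
incident with exactly `b v` edges of `M`. (Stated with integer-valued `b` so that
functions like `b - χ_u - χ_v` can be used without truncation.) -/
def SimpleGraph.IsBFactor (G : SimpleGraph V) (b : V → ℤ) (M : Finset (Sym2 V)) : Prop :=
  ↑M ⊆ G.edgeSet ∧ ∀ v : V, ((M.filter (fun e => v ∈ e)).card : ℤ) = b v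

/-- An edge is `b`-flexible if some `b`-factor contains it and some `b`-factor
avoids it. -/
def SimpleGraph.IsBFlexible (G : SimpleGraph V) (b : V → ℕ) (e : Sym2 V) : Prop :=
  (∃ M, G.IsBFactor (fun w => (b w : ℤ)) M ∧ e ∈ M) ∧
  (∃ M, G.IsBFactor (fun w => (b w : ℤ)) M ∧ e ∉ M)

/-- Two vertices are `b`-flexibly connected if there is a path between them all of
whose edges are `b`-flexible. -/
def SimpleGraph.BFlexConn (G : SimpleGraph V) (b : V → ℕ) (u v : V) : Prop :=
  ∃ p : G.Walk u v, p.IsPath ∧ ∀ e ∈ p.edges, G.IsBFlexible b e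

/-- The relation `∼_{b,-}`: `u ∼_{b,-} v` iff `u = v`, or `u` and `v` are `b`-flexibly
connected and `G` has no `(b - χ_u - χ_v)`-factor. -/
def SimpleGraph.BSimMinus (G : SimpleGraph V) (b : V → ℕ) (u v : V) : Prop :=
  u = v ∨ (G.BFlexConn b u v ∧
    ¬ ∃ M, G.IsBFactor
      (fun w => (b w : ℤ) - (if w = u then 1 else 0) - (if w = v then 1 else 0)) M)

open Finset
open scoped symmDiff

namespace SimpleGraph

section AlternatingWalks

-- `V` is redeclared so that the `[Fintype V]` above stays out of scope.
variable {V : Type*} {G : SimpleGraph V} {M : Finset (Sym2 V)}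

def dartEdges (S : List (V × V)) : List (Sym2 V) := S.map fun p => s(p.1, p.2)

def dartSupport (x : V) (S : List (V × V)) : List V := x :: S.map Prod.snd

def reverseDarts (S : List (V × V)) : List (V × V) := (S.map Prod.swap).reverse

@[simp] lemma dartEdges_nil : dartEdges ([] : List (V × V)) = [] := rfl

@[simp] lemma dartEdges_cons (p : V × V) (S : List (V × V)) :
    dartEdges (p :: S) = s(p.1, p.2) :: dartEdges S := rfl

@[simp] lemma dartEdges_append (S T : List (V × V)) :
    dartEdges (S ++ T) = dartEdges S ++ dartEdges T := List.map_append

@[simp] lemma dartEdges_reverseDarts (S : List (V × V)) :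
    dartEdges (reverseDarts S) = (dartEdges S).reverse := by
  simp [reverseDarts, dartEdges, Sym2.eq_swap]

lemma dartSupport_append (x : V) (S T : List (V × V)) :
    dartSupport x (S ++ T) = dartSupport x S ++ T.map Prod.snd := by
  simp [dartSupport]

/-- The colours `c`, `d` are those of the first and the last edge (`true` = in `M`); the empty
walk at `x` is given the colours `c` and `!c`, so that concatenation needs no special case. -/
inductive AltWalk (G : SimpleGraph V) (M : Finset (Sym2 V)) :
    V → V → Bool → Bool → List (V × V) → Prop
  | nil (x : V) (c : Bool) : AltWalk G M x x c (!c) []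
  | cons {x y z : V} {c d : Bool} {S : List (V × V)} (hadj : G.Adj x y)
      (hc : s(x, y) ∈ M ↔ c) (h : AltWalk G M y z (!c) d S) : AltWalk G M x z c d ((x, y) :: S)

namespace AltWalk

variable {x y z t : V} {c d d' : Bool} {S T : List (V × V)}

lemma append (h₁ : G.AltWalk M x y c d S) (h₂ : G.AltWalk M y z (!d) d' T) :
    G.AltWalk M x z c d' (S ++ T) := by
  induction h₁ with
  | nil x c => simpa using h₂
  | cons hadj hc _ ih => exact cons hadj hc (ih h₂)

lemma reverse (h : G.AltWalk M x y c d S) : G.AltWalk M y x d c (reverseDarts S) := by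
  induction h with
  | nil x c => simpa [reverseDarts] using nil (G := G) (M := M) x (!c)
  | @cons x y z c d S hadj hc _ ih =>
    have hyx : G.AltWalk M y x c c [(y, x)] := by
      simpa using cons hadj.symm (by rwa [Sym2.eq_swap]) (nil (G := G) (M := M) x (!c))
    simpa [reverseDarts] using ih.append (by simpa using hyx)

lemma mem_edgeSet (h : G.AltWalk M x y c d S) {e : Sym2 V} (he : e ∈ dartEdges S) :
    e ∈ G.edgeSet := by
  induction h with
  | nil => simp at he
  | cons hadj _ _ ih =>
    rcases List.mem_cons.mp (by simpa using he) with rfl | he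
    · exact hadj
    · exact ih he

lemma end_mem_dartSupport (h : G.AltWalk M x y c d S) : y ∈ dartSupport x S := by
  induction h with
  | nil => simp [dartSupport]
  | cons _ _ _ ih => exact List.mem_cons_of_mem _ ih

lemma dartSupport_eq (h : G.AltWalk M x y c d S) : dartSupport x S = S.map Prod.fst ++ [y] := by
  induction h with
  | nil => rfl
  | cons _ _ _ ih => simpa [dartSupport] using ih

lemma mem_dartSupport_reverse (h : G.AltWalk M x y c d S) :
    t ∈ dartSupport y (reverseDarts S) ↔ t ∈ dartSupport x S := by
  rw [h.dartSupport_eq]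
  simp [dartSupport, reverseDarts, List.map_reverse, Function.comp_def, or_comm]

lemma mem_dartSupport_of_mem_edge (h : G.AltWalk M x y c d S) {e : Sym2 V}
    (he : e ∈ dartEdges S) (ht : t ∈ e) : t ∈ dartSupport x S := by
  obtain ⟨p, hp, rfl⟩ := List.mem_map.mp he
  rcases Sym2.mem_iff.mp ht with rfl | rfl
  · rw [h.dartSupport_eq]
    exact List.mem_append_left _ (List.mem_map_of_mem hp)
  · exact List.mem_cons_of_mem _ (List.mem_map_of_mem hp)

lemma exists_split (h : G.AltWalk M x z c d S) (ht : t ∈ dartSupport x S) :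
    ∃ S₁ S₂ d₁, S = S₁ ++ S₂ ∧ G.AltWalk M x t c d₁ S₁ ∧ G.AltWalk M t z (!d₁) d S₂ := by
  induction h with
  | nil x c =>
    obtain rfl : t = x := by simpa [dartSupport] using ht
    exact ⟨[], [], !c, rfl, nil t c, by simpa using nil (G := G) (M := M) t (!!c)⟩
  | @cons x y z c d S hadj hc h ih =>
    rcases List.mem_cons.mp ht with rfl | ht
    · exact ⟨[], _, !c, rfl, nil t c, by simpa using cons hadj hc h⟩
    · obtain ⟨S₁, S₂, d₁, rfl, h₁, h₂⟩ := ih ht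
      exact ⟨(x, y) :: S₁, S₂, d₁, rfl, cons hadj hc h₁, h₂⟩

lemma exists_prefix_first (h : G.AltWalk M x z c d S) (A : V → Prop)
    (hA : ∃ t ∈ dartSupport x S, A t) :
    ∃ s S₁ S₂ d₁, A s ∧ S = S₁ ++ S₂ ∧ G.AltWalk M x s c d₁ S₁ ∧ ∀ p ∈ S₁, ¬ A p.1 := by
  induction h with
  | nil x c =>
    obtain ⟨t, ht, hAt⟩ := hA
    obtain rfl : t = x := by simpa [dartSupport] using ht
    exact ⟨t, [], [], !c, hAt, rfl, nil t c, by simp⟩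
  | @cons x y z c d S hadj hc h ih =>
    by_cases hAx : A x
    · exact ⟨x, [], _, !c, hAx, rfl, nil x c, by simp⟩
    · obtain ⟨t, ht, hAt⟩ := hA
      have ht' : t ∈ dartSupport y S := by
        rcases List.mem_cons.mp ht with rfl | ht
        · exact absurd hAt hAx
        · exact ht
      obtain ⟨s, S₁, S₂, d₁, hAs, rfl, h₁, hS₁⟩ := ih ⟨t, ht', hAt⟩
      refine ⟨s, (x, y) :: S₁, S₂, d₁, hAs, rfl, cons hadj hc h₁, ?_⟩
      intro p hp
      rcases List.mem_cons.mp hp with rfl | hp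
      exacts [hAx, hS₁ p hp]

lemma exists_rotate {C : List (V × V)} (h : G.AltWalk M x x c (!c) C) {s : V}
    (hs : s ∈ dartSupport x C) (β : Bool) :
    ∃ R, G.AltWalk M s s β (!β) R ∧ (dartEdges R).Perm (dartEdges C) ∧
      ∀ t ∈ dartSupport x C, t ∈ dartSupport s R := by
  obtain ⟨C₁, C₂, d₁, rfl, h₁, h₂⟩ := h.exists_split hs
  have hR : G.AltWalk M s s (!d₁) d₁ (C₂ ++ C₁) := h₂.append (by simpa using h₁)
  have hperm : (dartEdges (C₂ ++ C₁)).Perm (dartEdges (C₁ ++ C₂)) := by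
    simpa using List.perm_append_comm
  have hsupp : ∀ t ∈ dartSupport x (C₁ ++ C₂), t ∈ dartSupport s (C₂ ++ C₁) := by
    intro t ht
    rw [dartSupport_append, List.mem_append, dartSupport, List.mem_cons] at ht
    rw [dartSupport_append, List.mem_append]
    rcases ht with (rfl | ht) | ht
    · exact Or.inl h₂.end_mem_dartSupport
    · exact Or.inr ht
    · exact Or.inl (List.mem_cons_of_mem _ ht)
  by_cases hβ : β = !d₁
  · subst hβ
    exact ⟨_, by simpa using hR, hperm, hsupp⟩
  · obtain rfl : β = d₁ := by simpa using hβ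
    refine ⟨_, hR.reverse, ?_, fun t ht => hR.mem_dartSupport_reverse.mpr (hsupp t ht)⟩
    simpa using (List.reverse_perm _).trans hperm

lemma exists_subtrail_of_closed {C : List (V × V)} (h : G.AltWalk M x x c (!c) C)
    (hC : (dartEdges C).Nodup) {s : V} (hs : s ∈ dartSupport x C) (hy : y ∈ dartSupport x C)
    (β : Bool) :
    ∃ R d, G.AltWalk M s y β d R ∧ (dartEdges R).Nodup ∧ dartEdges R ⊆ dartEdges C := by
  obtain ⟨R, hR, hperm, hsupp⟩ := h.exists_rotate hs β
  obtain ⟨R₁, R₂, d₁, rfl, h₁, -⟩ := hR.exists_split (hsupp y hy)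
  rw [dartEdges_append] at hperm
  have hR₁ := List.sublist_append_left (dartEdges R₁) (dartEdges R₂)
  exact ⟨R₁, d₁, h₁, hR₁.nodup (hperm.nodup_iff.mpr hC), fun e he => hperm.subset (hR₁.subset he)⟩

end AltWalk

lemma nodup_dartEdges_append {S R : List (V × V)} (A : V → Prop)
    (hS : (dartEdges S).Nodup) (hR : (dartEdges R).Nodup) (hSA : ∀ p ∈ S, ¬ A p.1)
    (hRA : ∀ e ∈ dartEdges R, ∀ t ∈ e, A t) : (dartEdges (S ++ R)).Nodup := by
  rw [dartEdges_append]
  refine List.nodup_append.mpr ⟨hS, hR, ?_⟩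
  rintro _ he e' he' rfl
  obtain ⟨p, hp, rfl⟩ := List.mem_map.mp he
  exact hSA p hp (hRA _ he' p.1 (Sym2.mem_mk_left _ _))

def AltReachable (G : SimpleGraph V) (M : Finset (Sym2 V)) (v x : V) : Prop :=
  ∃ S d, G.AltWalk M v x true d S ∧ (dartEdges S).Nodup

namespace AltReachable

variable {v x y : V}

lemma refl (v : V) : G.AltReachable M v v := ⟨[], false, .nil v true, List.nodup_nil⟩

/-- Leave the trail from `v` where it first meets the closed trail, and continue around the
closed trail in the direction that keeps the colours alternating. -/
lemma of_closed (hx : G.AltReachable M v x) {c : Bool} {C : List (V × V)}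
    (hC : G.AltWalk M x x c (!c) C) (hCn : (dartEdges C).Nodup) (hy : y ∈ dartSupport x C) :
    G.AltReachable M v y := by
  obtain ⟨X, _, hX, hXn⟩ := hx
  obtain ⟨s, S₁, S₂, d₁, hs, rfl, h₁, hS₁⟩ := hX.exists_prefix_first (· ∈ dartSupport x C)
    ⟨x, hX.end_mem_dartSupport, List.mem_cons_self⟩
  obtain ⟨R, d, hR, hRn, hRC⟩ := hC.exists_subtrail_of_closed hCn hs hy (!d₁)
  refine ⟨S₁ ++ R, d, h₁.append hR, nodup_dartEdges_append (· ∈ dartSupport x C) ?_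
    hRn hS₁ fun e he t ht => hC.mem_dartSupport_of_mem_edge (hRC he) ht⟩
  rw [dartEdges_append] at hXn
  exact hXn.of_append_left

end AltReachable

end AlternatingWalks

section Factors

variable {V : Type*} [DecidableEq V] {G : SimpleGraph V} {M : Finset (Sym2 V)}

def boolSign (c : Bool) : ℤ := if c then 1 else -1

@[simp] lemma boolSign_true : boolSign true = 1 := rfl

@[simp] lemma boolSign_false : boolSign false = -1 := rfl

@[simp] lemma boolSign_not (c : Bool) : boolSign (!c) = -boolSign c := by cases c <;> rfl

def edgeSign (M : Finset (Sym2 V)) (e : Sym2 V) : ℤ := if e ∈ M then 1 else -1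

lemma edgeSign_eq_boolSign {e : Sym2 V} {c : Bool} (hc : e ∈ M ↔ c) :
    edgeSign M e = boolSign c := by
  cases c <;> simp_all [edgeSign]

def signedDeg (M T : Finset (Sym2 V)) (t : V) : ℤ := ∑ e ∈ T with t ∈ e, edgeSign M e

lemma signedDeg_insert {T : Finset (Sym2 V)} {e : Sym2 V} (he : e ∉ T) (t : V) :
    signedDeg M (insert e T) t = signedDeg M T t + if t ∈ e then edgeSign M e else 0 := by
  unfold signedDeg
  rw [filter_insert]
  split_ifs with ht
  · rw [sum_insert (fun h => he (mem_filter.mp h).1), add_comm]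
  · rw [add_zero]

lemma signedDeg_erase {T : Finset (Sym2 V)} {e : Sym2 V} (he : e ∈ T) (t : V) :
    signedDeg M (T.erase e) t = signedDeg M T t - if t ∈ e then edgeSign M e else 0 := by
  rw [← insert_erase he, signedDeg_insert (notMem_erase e T), erase_insert (notMem_erase e T)]
  ring

lemma boolSign_mul_signedDeg_nonpos {D : Finset (Sym2 V)} {x : V} {c : Bool}
    (h : ∀ e ∈ D, x ∈ e → ¬(e ∈ M ↔ c)) : boolSign c * signedDeg M D x ≤ 0 := by
  rw [signedDeg, mul_sum]
  refine sum_nonpos fun e he => ?_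
  rw [mem_filter] at he
  rw [edgeSign_eq_boolSign (c := !c) (by cases c <;> simpa using h e he.1 he.2)]
  cases c <;> simp

lemma IsBFactor.symmDiff {b : V → ℤ} {T : Finset (Sym2 V)} (hM : G.IsBFactor b M)
    (hT : ↑T ⊆ G.edgeSet) : G.IsBFactor (fun t => b t - signedDeg M T t) (M ∆ T) := by
  refine ⟨fun e he => ?_, fun t => ?_⟩
  · rcases mem_symmDiff.mp he with ⟨he, -⟩ | ⟨he, -⟩
    exacts [hM.1 he, hT he]
  · have hcard : ∀ S ⊆ M ∪ T, ((S.filter (t ∈ ·)).card : ℤ) =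
        ∑ e ∈ (M ∪ T).filter (t ∈ ·), if e ∈ S then 1 else 0 := by
      intro S hS
      rw [sum_boole, filter_filter]
      congr 2
      ext e
      simp only [mem_filter]
      exact ⟨fun h => ⟨hS h.1, h.2, h.1⟩, fun h => ⟨h.2.2, h.2.1⟩⟩
    have hsigned : signedDeg M T t =
        ∑ e ∈ (M ∪ T).filter (t ∈ ·), if e ∈ T then edgeSign M e else 0 := by
      rw [signedDeg, ← sum_filter, filter_filter]
      congr 1
      ext e
      simp only [mem_filter, mem_union]
      tauto
    show _ = b t - _
    rw [← hM.2 t, hcard _ symmDiff_le_sup, hcard _ subset_union_left, hsigned,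
      ← sum_sub_distrib]
    refine sum_congr rfl fun e _ => ?_
    by_cases heM : e ∈ M <;> by_cases heT : e ∈ T <;> simp [mem_symmDiff, edgeSign, heM, heT]

lemma IsBFactor.coe_symmDiff_subset {b f : V → ℤ} {F : Finset (Sym2 V)}
    (hM : G.IsBFactor b M) (hF : G.IsBFactor f F) : ↑(M ∆ F) ⊆ G.edgeSet := fun e he => by
  rcases mem_symmDiff.mp he with ⟨he, -⟩ | ⟨he, -⟩
  exacts [hM.1 he, hF.1 he]

lemma IsBFactor.signedDeg_symmDiff {b f : V → ℤ} {F : Finset (Sym2 V)} (hM : G.IsBFactor b M)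
    (hF : G.IsBFactor f F) (t : V) : signedDeg M (M ∆ F) t = b t - f t := by
  have := (hM.symmDiff (hM.coe_symmDiff_subset hF)).2 t
  rw [symmDiff_symmDiff_cancel_left, hF.2 t] at this
  linarith

def defect (b : V → ℤ) (u v : V) : V → ℤ :=
  fun w => b w - (if w = u then 1 else 0) - (if w = v then 1 else 0)

lemma defect_comm (b : V → ℤ) (u v : V) : defect b u v = defect b v u := by
  funext w
  simp only [defect]
  ring

lemma exists_isBFactor_defect_comm {b : V → ℤ} {u v : V} :
    (∃ F, G.IsBFactor (defect b u v) F) ↔ ∃ F, G.IsBFactor (defect b v u) F := by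
  rw [defect_comm]

namespace AltWalk

variable {x y : V} {c d : Bool} {S : List (V × V)}

lemma signedDeg_toFinset (h : G.AltWalk M x y c d S) (hS : (dartEdges S).Nodup) (t : V) :
    signedDeg M (dartEdges S).toFinset t =
      boolSign c * (if t = x then 1 else 0) + boolSign d * (if t = y then 1 else 0) := by
  induction h with
  | nil x c => by_cases t = x <;> simp [signedDeg, *]
  | @cons x y z c d S hadj hc h ih =>
    rw [dartEdges_cons, List.nodup_cons] at hS
    rw [dartEdges_cons, List.toFinset_cons, signedDeg_insert (by simpa using hS.1), ih hS.2,
      edgeSign_eq_boolSign hc, boolSign_not]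
    have := hadj.ne
    by_cases htx : t = x <;> by_cases hty : t = y <;> simp_all [add_comm]

lemma exists_isBFactor_defect {b : V → ℤ} (hM : G.IsBFactor b M)
    (h : G.AltWalk M x y true true S) (hS : (dartEdges S).Nodup) :
    ∃ F, G.IsBFactor (defect b x y) F := by
  refine ⟨M ∆ (dartEdges S).toFinset, ?_⟩
  convert hM.symmDiff (T := (dartEdges S).toFinset)
    (fun e he => h.mem_edgeSet (List.mem_toFinset.mp he)) using 1
  funext t
  rw [h.signedDeg_toFinset hS, defect]
  simp only [boolSign_true, one_mul]
  ring

end AltWalk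

/-- Greedy construction: walk along unused edges of `D` of the required colour; the signed degrees
guarantee that one is available until the walk has reached `y` with the right colour. -/
lemma exists_altWalk_of_signedDeg {D : Finset (Sym2 V)} (hD : ↑D ⊆ G.edgeSet) {x y : V}
    {c d : Bool} (hσ : ∀ t, signedDeg M D t =
      boolSign c * (if t = x then 1 else 0) + boolSign d * (if t = y then 1 else 0)) :
    ∃ S, G.AltWalk M x y c d S ∧ (dartEdges S).Nodup ∧ ∀ e ∈ dartEdges S, e ∈ D := by
  induction D using Finset.strongInduction generalizing x c with
  | H D ih =>
  by_cases hex : ∃ e ∈ D, x ∈ e ∧ (e ∈ M ↔ c)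
  · obtain ⟨e, heD, hxe, hc⟩ := hex
    obtain ⟨z, rfl⟩ := Sym2.mem_iff_exists.mp hxe
    have hadj : G.Adj x z := hD heD
    have hσ' : ∀ t, signedDeg M (D.erase s(x, z)) t =
        boolSign (!c) * (if t = z then 1 else 0) + boolSign d * (if t = y then 1 else 0) := by
      intro t
      rw [signedDeg_erase heD, hσ t, edgeSign_eq_boolSign hc, boolSign_not]
      have := hadj.ne
      by_cases htx : t = x <;> by_cases htz : t = z <;> simp_all [sub_eq_add_neg, add_comm]
    obtain ⟨S, hS, hSn, hSD⟩ :=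
      ih _ (erase_ssubset heD) (fun e he => hD (mem_of_mem_erase he)) hσ'
    refine ⟨(x, z) :: S, .cons hadj hc hS, ?_, ?_⟩
    · rw [dartEdges_cons, List.nodup_cons]
      exact ⟨fun h => notMem_erase _ _ (hSD _ h), hSn⟩
    · intro e he
      rcases List.mem_cons.mp he with rfl | he
      exacts [heD, mem_of_mem_erase (hSD e he)]
  · have hle := boolSign_mul_signedDeg_nonpos fun e he hxe hc => hex ⟨e, he, hxe, hc⟩
    rw [hσ x] at hle
    obtain ⟨rfl, rfl⟩ : y = x ∧ d = !c := by
      by_cases hxy : x = y <;> cases c <;> cases d <;> simp_all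
    exact ⟨[], .nil y c, List.nodup_nil, by simp⟩

lemma exists_closed_altWalk_of_mem_symmDiff {b : V → ℤ} {M' : Finset (Sym2 V)}
    (hM : G.IsBFactor b M) (hM' : G.IsBFactor b M') {x y : V} (hxy : s(x, y) ∈ M ∆ M') :
    ∃ c C, G.AltWalk M x x c (!c) C ∧ (dartEdges C).Nodup ∧ y ∈ dartSupport x C := by
  have hE := hM.coe_symmDiff_subset hM'
  have hadj : G.Adj x y := hE hxy
  have hc : s(x, y) ∈ M ↔ decide (s(x, y) ∈ M) := by simp
  have hσ : ∀ t, signedDeg M ((M ∆ M').erase s(x, y)) t =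
      boolSign (!decide (s(x, y) ∈ M)) * (if t = y then 1 else 0) +
        boolSign (!decide (s(x, y) ∈ M)) * (if t = x then 1 else 0) := by
    intro t
    rw [signedDeg_erase hxy, hM.signedDeg_symmDiff hM' t, edgeSign_eq_boolSign hc, boolSign_not]
    have := hadj.ne
    by_cases htx : t = x <;> by_cases hty : t = y <;> simp_all [add_comm]
  obtain ⟨S, hS, hSn, hSD⟩ := exists_altWalk_of_signedDeg (fun e he => hE (mem_of_mem_erase he)) hσ
  refine ⟨_, (x, y) :: S, .cons hadj hc hS, ?_, List.mem_cons_of_mem _ List.mem_cons_self⟩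
  rw [dartEdges_cons, List.nodup_cons]
  exact ⟨fun h => notMem_erase _ _ (hSD _ h), hSn⟩

lemma exists_altWalk_of_isBFactor_defect {b : V → ℤ} {F : Finset (Sym2 V)}
    (hM : G.IsBFactor b M) {u w : V} (hF : G.IsBFactor (defect b u w) F) :
    ∃ T, G.AltWalk M u w true true T ∧ (dartEdges T).Nodup := by
  have hσ : ∀ t, signedDeg M (M ∆ F) t =
      boolSign true * (if t = u then 1 else 0) + boolSign true * (if t = w then 1 else 0) := by
    intro t
    rw [hM.signedDeg_symmDiff hF t]
    simp only [defect, boolSign_true, one_mul]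
    ring
  obtain ⟨T, hT, hTn, -⟩ := exists_altWalk_of_signedDeg (hM.coe_symmDiff_subset hF) hσ
  exact ⟨T, hT, hTn⟩

namespace AltReachable

variable {v x y : V}

lemma of_mem_symmDiff {b : V → ℤ} {M' : Finset (Sym2 V)} (hM : G.IsBFactor b M)
    (hM' : G.IsBFactor b M') (hx : G.AltReachable M v x) (hxy : s(x, y) ∈ M ∆ M') :
    G.AltReachable M v y :=
  let ⟨_, _, hC, hCn, hy⟩ := exists_closed_altWalk_of_mem_symmDiff hM hM' hxy
  hx.of_closed hC hCn hy

/-- Follow `v`'s trail until it first meets the `u`–`w` trail `T`, then turn along `T` towards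
whichever end keeps the colours alternating. -/
lemma exists_isBFactor_defect {b : V → ℤ} (hM : G.IsBFactor b M) {u w : V}
    (hv : G.AltReachable M v w) {T : List (V × V)} (hT : G.AltWalk M u w true true T)
    (hTn : (dartEdges T).Nodup) :
    (∃ F, G.IsBFactor (defect b v u) F) ∨ ∃ F, G.IsBFactor (defect b v w) F := by
  obtain ⟨Q, _, hQ, hQn⟩ := hv
  obtain ⟨s, S₁, S₂, d₁, hs, rfl, h₁, hS₁⟩ := hQ.exists_prefix_first (· ∈ dartSupport u T)
    ⟨w, hQ.end_mem_dartSupport, hT.end_mem_dartSupport⟩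
  rw [dartEdges_append] at hQn
  have splice : ∀ {z R}, G.AltWalk M s z (!d₁) true R → (dartEdges R).Nodup →
      dartEdges R ⊆ dartEdges T → ∃ F, G.IsBFactor (defect b v z) F :=
    fun hR hRn hRT => (h₁.append hR).exists_isBFactor_defect hM <|
      nodup_dartEdges_append _ hQn.of_append_left hRn hS₁
        fun e he t ht => hT.mem_dartSupport_of_mem_edge (hRT he) ht
  obtain ⟨T₁, T₂, d, rfl, hT₁, hT₂⟩ := hT.exists_split hs
  rw [dartEdges_append] at hTn
  by_cases hd : d = d₁
  · subst hd
    exact Or.inr (splice hT₂ hTn.of_append_right (by simp))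
  · obtain rfl : d = !d₁ := by cases d <;> cases d₁ <;> simp_all
    refine Or.inl (splice hT₁.reverse (by simpa using hTn.of_append_left) ?_)
    intro e he
    simp_all

end AltReachable

lemma IsBFlexible.exists_mem_symmDiff {b : V → ℕ} {e : Sym2 V} (he : G.IsBFlexible b e)
    (M : Finset (Sym2 V)) : ∃ M', G.IsBFactor (fun w => (b w : ℤ)) M' ∧ e ∈ M ∆ M' := by
  by_cases heM : e ∈ M
  · obtain ⟨M', hM', he'⟩ := he.2
    exact ⟨M', hM', mem_symmDiff.mpr (Or.inl ⟨heM, he'⟩)⟩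
  · obtain ⟨M', hM', he'⟩ := he.1
    exact ⟨M', hM', mem_symmDiff.mpr (Or.inr ⟨he', heM⟩)⟩

lemma AltReachable.of_walk {b : V → ℕ} (hM : G.IsBFactor (fun w => (b w : ℤ)) M) {v x w : V}
    (hx : G.AltReachable M v x) (q : G.Walk x w) (hq : ∀ e ∈ q.edges, G.IsBFlexible b e) :
    G.AltReachable M v w := by
  induction q with
  | nil => exact hx
  | cons hadj q ih =>
    obtain ⟨M', hM', he⟩ := (hq _ List.mem_cons_self).exists_mem_symmDiff M
    exact ih (hx.of_mem_symmDiff hM hM' he) fun e he => hq e (List.mem_cons_of_mem _ he)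

lemma BFlexConn.symm {b : V → ℕ} {u v : V} (h : G.BFlexConn b u v) : G.BFlexConn b v u :=
  let ⟨p, hp, hpb⟩ := h
  ⟨p.reverse, hp.reverse, fun e he => hpb e (by simpa using he)⟩

lemma BFlexConn.trans {b : V → ℕ} {u v w : V} (h₁ : G.BFlexConn b u v)
    (h₂ : G.BFlexConn b v w) : G.BFlexConn b u w := by
  obtain ⟨p, -, hp⟩ := h₁
  obtain ⟨q, -, hq⟩ := h₂
  refine ⟨(p.append q).bypass, (p.append q).bypass_isPath, fun e he => ?_⟩
  rcases List.mem_append.mp (Walk.edges_append p q ▸ Walk.edges_bypass_subset_edges _ he) with h | h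
  exacts [hp e h, hq e h]

theorem exists_isBFactor_defect_of_bFlexConn {b : V → ℕ} {M : Finset (Sym2 V)}
    (hM : G.IsBFactor (fun w => (b w : ℤ)) M) {u v w : V}
    (huw : ∃ F, G.IsBFactor (defect (fun t => (b t : ℤ)) u w) F) (hvw : G.BFlexConn b v w) :
    (∃ F, G.IsBFactor (defect (fun t => (b t : ℤ)) v u) F) ∨
      ∃ F, G.IsBFactor (defect (fun t => (b t : ℤ)) v w) F := by
  obtain ⟨F, hF⟩ := huw
  obtain ⟨T, hT, hTn⟩ := exists_altWalk_of_isBFactor_defect hM hF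
  obtain ⟨q, -, hq⟩ := hvw
  exact ((AltReachable.refl v).of_walk hM q hq).exists_isBFactor_defect hM hT hTn

end Factors

end SimpleGraph

/-- For a `b`-factorizable graph `G`, the relation `∼_{b,-}` is an
equivalence relation on `V(G)`. -/
theorem bSimMinus_equivalence (G : SimpleGraph V) (b : V → ℕ)
    (hG : ∃ M, G.IsBFactor (fun w => (b w : ℤ)) M) :
    Equivalence (G.BSimMinus b) := by
  obtain ⟨M, hM⟩ := hG
  refine ⟨fun u => Or.inl rfl, ?_, ?_⟩
  · rintro u v (rfl | ⟨hc, hD⟩)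
    · exact Or.inl rfl
    · exact Or.inr ⟨hc.symm, fun h => hD (SimpleGraph.exists_isBFactor_defect_comm.mp h)⟩
  · rintro u v w (rfl | ⟨hc₁, hD₁⟩) (rfl | ⟨hc₂, hD₂⟩)
    · exact Or.inl rfl
    · exact Or.inr ⟨hc₂, hD₂⟩
    · exact Or.inr ⟨hc₁, hD₁⟩
    · refine Or.inr ⟨hc₁.trans hc₂, fun huw => ?_⟩
      rcases SimpleGraph.exists_isBFactor_defect_of_bFlexConn hM huw hc₂ with hvu | hvw
      exacts [hD₁ (SimpleGraph.exists_isBFactor_defect_comm.mp hvu), hD₂ hvw]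
end
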